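/- Let (X, ‖·‖) be a complex normed space and x, y ≠ 0 with ∠(x,y) = π/2 + i·b for some b ∈ ℝ (necessarily |b| ≤ log(√2 + 1)). Then ∠(i·x, y) is pure real and ∠(i·x, y) = π/2 − (1/2)·sgn(b)·arccos(3 − 2·cosh²(b)) = π/2 − (1/2)·sgn(b)·arccos(2 − cosh(2b)) = π/2 − arcsin(sinh(b)) = arccos(sinh(b)), using the real arccosine, arcsine, hyperbolic sine and hyperbolic cosine. -/
import Mathlib


/-- The real area hyperbolic cosine, `arcosh x = log (x + √(x² − 1))`. -/
noncomputable def arcosh (x : ℝ) : ℝ := Real.log (x + Real.sqrt (x ^ 2 - 1))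

/-- `G₋ = √((r²+s²−1)² + 4s²) − (r²+s²)` for `z = r + i·s`. -/
noncomputable def Gminus (z : ℂ) : ℝ :=
  Real.sqrt ((z.re ^ 2 + z.im ^ 2 - 1) ^ 2 + 4 * z.im ^ 2) - (z.re ^ 2 + z.im ^ 2)

/-- `G₊ = √((r²+s²−1)² + 4s²) + (r²+s²)` for `z = r + i·s`. -/
noncomputable def Gplus (z : ℂ) : ℝ :=
  Real.sqrt ((z.re ^ 2 + z.im ^ 2 - 1) ^ 2 + 4 * z.im ^ 2) + (z.re ^ 2 + z.im ^ 2)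

/-- The complex arcsine: `arcsin(r+is) = ½·(sgn r · arccos G₋ + i · sgn s · arcosh G₊)`. -/
noncomputable def carcsin (z : ℂ) : ℂ :=
  (1 / 2 : ℂ) *
    (((Real.sign z.re * Real.arccos (Gminus z) : ℝ) : ℂ) +
      Complex.I * ((Real.sign z.im * arcosh (Gplus z) : ℝ) : ℂ))

/-- The complex arccosine: `arccos z = π/2 − arcsin z`. -/
noncomputable def carccos (z : ℂ) : ℂ := ((Real.pi / 2 : ℝ) : ℂ) - carcsin z
/-- The continuous product `⟨x|y⟩` in a complex normed space. -/
noncomputable def cprod {X : Type*} [NormedAddCommGroup X] [NormedSpace ℂ X] (x y : X) : ℂ :=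
  open scoped Classical in
  if x = 0 ∨ y = 0 then 0
  else
    ((‖x‖ * ‖y‖ : ℝ) : ℂ) * (1 / 4 : ℂ) *
      (((‖((‖x‖⁻¹ : ℝ) : ℂ) • x + ((‖y‖⁻¹ : ℝ) : ℂ) • y‖ ^ 2
          - ‖((‖x‖⁻¹ : ℝ) : ℂ) • x - ((‖y‖⁻¹ : ℝ) : ℂ) • y‖ ^ 2 : ℝ) : ℂ)
        + Complex.I *
          ((‖((‖x‖⁻¹ : ℝ) : ℂ) • x + Complex.I • (((‖y‖⁻¹ : ℝ) : ℂ) • y)‖ ^ 2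
            - ‖((‖x‖⁻¹ : ℝ) : ℂ) • x - Complex.I • (((‖y‖⁻¹ : ℝ) : ℂ) • y)‖ ^ 2 : ℝ) : ℂ))
/-- The complex angle `∠(x,y) = arccos(⟨x|y⟩ / (‖x‖·‖y‖))`. -/
noncomputable def cangle {X : Type*} [NormedAddCommGroup X] [NormedSpace ℂ X] (x y : X) : ℂ :=
  carccos (cprod x y / ((‖x‖ * ‖y‖ : ℝ) : ℂ))

/- auxiliary lemmas -/

lemma arcosh_one : arcosh 1 = 0 := by simp [arcosh]

lemma arcosh_one_add_two_sq (s : ℝ) : arcosh (1 + 2 * s ^ 2) = 2 * Real.arsinh |s| := by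
  have h1 : Real.sqrt ((1 + 2 * s ^ 2) ^ 2 - 1) = 2 * |s| * Real.sqrt (1 + s ^ 2) := by
    rw [show (1 + 2 * s ^ 2) ^ 2 - 1 = (2 * |s| * Real.sqrt (1 + s ^ 2)) ^ 2 by
      rw [mul_pow, mul_pow, sq_abs, Real.sq_sqrt (by positivity)]; ring]
    exact Real.sqrt_sq (by positivity)
  have h2 : Real.sqrt (1 + s ^ 2) ^ 2 = 1 + s ^ 2 := Real.sq_sqrt (by positivity)
  have h3 : (1 + 2 * s ^ 2) + 2 * |s| * Real.sqrt (1 + s ^ 2)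
      = (|s| + Real.sqrt (1 + s ^ 2)) ^ 2 := by rw [add_sq, h2, sq_abs]; ring
  rw [arcosh, h1, h3, Real.log_pow, Real.arsinh, sq_abs]
  push_cast; ring

lemma sign_mul_arsinh_abs (s : ℝ) : Real.sign s * Real.arsinh |s| = Real.arsinh s := by
  rcases lt_trichotomy s 0 with h | h | h
  · rw [Real.sign_of_neg h, abs_of_neg h, Real.arsinh_neg]; ring
  · simp [h]
  · rw [Real.sign_of_pos h, abs_of_pos h]; ring

lemma sign_mul_arcsin_abs (t : ℝ) : Real.sign t * Real.arcsin |t| = Real.arcsin t := by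
  rcases lt_trichotomy t 0 with h | h | h
  · rw [Real.sign_of_neg h, abs_of_neg h, Real.arcsin_neg]; ring
  · simp [h]
  · rw [Real.sign_of_pos h, abs_of_pos h]; ring

lemma arccos_one_sub_two_sq {t : ℝ} (ht : |t| ≤ 1) :
    Real.arccos (1 - 2 * t ^ 2) = 2 * Real.arcsin |t| := by
  have h0 : (0:ℝ) ≤ |t| := abs_nonneg t
  have ha1 : 0 ≤ Real.arcsin |t| := Real.arcsin_nonneg.2 h0
  have ha2 : Real.arcsin |t| ≤ Real.pi / 2 := Real.arcsin_le_pi_div_two _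
  have : Real.cos (2 * Real.arcsin |t|) = 1 - 2 * t ^ 2 := by
    rw [Real.cos_two_mul', Real.sin_arcsin (by linarith) ht]
    rw [Real.cos_arcsin, Real.sq_sqrt (by nlinarith [sq_abs t] : (0:ℝ) ≤ 1 - |t| ^ 2), sq_abs]
    ring
  rw [← this, Real.arccos_cos (by linarith) (by linarith)]

lemma sign_sinh (b : ℝ) : Real.sign (Real.sinh b) = Real.sign b := by
  rcases lt_trichotomy b 0 with h | h | h
  · rw [Real.sign_of_neg h, Real.sign_of_neg (by simpa using Real.sinh_neg_iff.2 h)]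
  · simp [h]
  · rw [Real.sign_of_pos h, Real.sign_of_pos (by simpa using Real.sinh_pos_iff.2 h)]

lemma carccos_re (z : ℂ) :
    (carccos z).re = Real.pi / 2 - Real.sign z.re * Real.arccos (Gminus z) / 2 := by
  simp [carccos, carcsin]; ring

lemma carccos_im (z : ℂ) :
    (carccos z).im = -(Real.sign z.im * arcosh (Gplus z)) / 2 := by
  simp [carccos, carcsin]; ring

lemma Gminus_lt_one {z : ℂ} (h : z.re ≠ 0) : Gminus z < 1 := by
  have hA : (0:ℝ) < 1 + (z.re ^ 2 + z.im ^ 2) := by positivity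
  have hlt : Real.sqrt ((z.re ^ 2 + z.im ^ 2 - 1) ^ 2 + 4 * z.im ^ 2)
      < 1 + (z.re ^ 2 + z.im ^ 2) := by
    rw [Real.sqrt_lt' hA]
    have : z.re ^ 2 > 0 := by positivity
    nlinarith
  unfold Gminus; linarith

lemma Gplus_of_re_zero {z : ℂ} (h : z.re = 0) : Gplus z = 1 + 2 * z.im ^ 2 := by
  unfold Gplus
  rw [h, show ((0:ℝ) ^ 2 + z.im ^ 2 - 1) ^ 2 + 4 * z.im ^ 2 = (z.im ^ 2 + 1) ^ 2 by ring,
    Real.sqrt_sq (by positivity)]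
  ring

lemma carccos_ofReal {t : ℝ} (ht : t ^ 2 ≤ 1) :
    carccos (t : ℂ) = ((Real.pi / 2 - Real.sign t * Real.arccos (1 - 2 * t ^ 2) / 2 : ℝ) : ℂ) := by
  have hre : (t : ℂ).re = t := Complex.ofReal_re t
  have him : (t : ℂ).im = 0 := Complex.ofReal_im t
  have hgm : Gminus (t : ℂ) = 1 - 2 * t ^ 2 := by
    unfold Gminus
    rw [hre, him, show (t ^ 2 + (0:ℝ) ^ 2 - 1) ^ 2 + 4 * (0:ℝ) ^ 2 = (1 - t ^ 2) ^ 2 by ring,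
      Real.sqrt_sq (by linarith)]
    ring
  have hgp : Gplus (t : ℂ) = 1 := by
    unfold Gplus
    rw [hre, him, show (t ^ 2 + (0:ℝ) ^ 2 - 1) ^ 2 + 4 * (0:ℝ) ^ 2 = (1 - t ^ 2) ^ 2 by ring,
      Real.sqrt_sq (by linarith)]
    ring
  rw [carccos, carcsin, hre, him, hgm, hgp, arcosh_one]
  simp
  ring

set_option maxHeartbeats 1000000 in
/-- if `∠(x,y) = π/2 + i·b` then necessarily `|b| ≤ log(√2 + 1)`, and
`∠(i·x,y)` is pure real with
`∠(i·x,y) = π/2 − ½·sgn(b)·arccos(3 − 2·cosh²(b)) = π/2 − ½·sgn(b)·arccos(2 − cosh(2b))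
          = π/2 − arcsin(sinh(b)) = arccos(sinh(b))`. -/
theorem stmt14 {X : Type*} [NormedAddCommGroup X] [NormedSpace ℂ X] (x y : X)
    (hx : x ≠ 0) (hy : y ≠ 0) (b : ℝ)
    (hangle : cangle x y = ((Real.pi / 2 : ℝ) : ℂ) + Complex.I * ((b : ℝ) : ℂ)) :
    |b| ≤ Real.log (Real.sqrt 2 + 1) ∧
    (cangle (Complex.I • x) y).im = 0 ∧
    cangle (Complex.I • x) y
        = ((Real.pi / 2 - 1 / 2 * Real.sign b * Real.arccos (3 - 2 * Real.cosh b ^ 2) : ℝ) : ℂ) ∧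
    cangle (Complex.I • x) y
        = ((Real.pi / 2 - 1 / 2 * Real.sign b * Real.arccos (2 - Real.cosh (2 * b)) : ℝ) : ℂ) ∧
    cangle (Complex.I • x) y = ((Real.pi / 2 - Real.arcsin (Real.sinh b) : ℝ) : ℂ) ∧
    cangle (Complex.I • x) y = ((Real.arccos (Real.sinh b) : ℝ) : ℂ) := by
  have hnx : ‖x‖ ≠ 0 := norm_ne_zero_iff.2 hx
  have hny : ‖y‖ ≠ 0 := norm_ne_zero_iff.2 hy
  set u : X := ((‖x‖⁻¹ : ℝ) : ℂ) • x with hu_def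
  set v : X := ((‖y‖⁻¹ : ℝ) : ℂ) • y with hv_def
  have hu1 : ‖u‖ = 1 := by
    rw [hu_def, norm_smul]
    simp [abs_of_nonneg, inv_mul_cancel₀ hnx]
  have hv1 : ‖v‖ = 1 := by
    rw [hv_def, norm_smul]
    simp [abs_of_nonneg, inv_mul_cancel₀ hny]
  have hIv1 : ‖Complex.I • v‖ = 1 := by rw [norm_smul, Complex.norm_I, one_mul, hv1]
  set A : ℝ := ‖u + v‖ ^ 2 - ‖u - v‖ ^ 2 with hA_def
  set B : ℝ := ‖u + Complex.I • v‖ ^ 2 - ‖u - Complex.I • v‖ ^ 2 with hB_def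
  have hcp : cprod x y
      = ((‖x‖ * ‖y‖ : ℝ) : ℂ) * (1 / 4 : ℂ) * (((A : ℝ) : ℂ) + Complex.I * ((B : ℝ) : ℂ)) := by
    rw [cprod, if_neg (by push_neg; exact ⟨hx, hy⟩)]
  have hc : ((‖x‖ * ‖y‖ : ℝ) : ℂ) ≠ 0 := by
    exact Complex.ofReal_ne_zero.2 (mul_ne_zero hnx hny)
  set z : ℂ := cprod x y / ((‖x‖ * ‖y‖ : ℝ) : ℂ) with hz_def
  have hcp' : cprod x y
      = ((‖x‖ * ‖y‖ : ℝ) : ℂ) * (((A / 4 : ℝ) : ℂ) + ((B / 4 : ℝ) : ℂ) * Complex.I) := by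
    rw [hcp]; push_cast; ring
  have hzeq : z = ((A / 4 : ℝ) : ℂ) + ((B / 4 : ℝ) : ℂ) * Complex.I := by
    rw [hz_def, hcp', mul_div_cancel_left₀ _ hc]
  have hzre : z.re = A / 4 := by rw [hzeq]; simp
  have hzim : z.im = B / 4 := by rw [hzeq]; simp
  have hca : cangle x y = carccos z := rfl
  -- extract re and im equations
  have hRre : (((Real.pi / 2 : ℝ) : ℂ) + Complex.I * ((b : ℝ) : ℂ)).re = Real.pi / 2 := by
    simp
  have hRim : (((Real.pi / 2 : ℝ) : ℂ) + Complex.I * ((b : ℝ) : ℂ)).im = b := by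
    simp
  have h1 : Real.sign z.re * Real.arccos (Gminus z) = 0 := by
    have h := congrArg Complex.re hangle
    rw [hca, carccos_re, hRre] at h
    linarith
  have h2 : Real.sign z.im * arcosh (Gplus z) = -(2 * b) := by
    have h := congrArg Complex.im hangle
    rw [hca, carccos_im, hRim] at h
    linarith
  -- z.re = 0
  have hre0 : z.re = 0 := by
    by_contra h
    have hgm := Gminus_lt_one h
    have hpos : 0 < Real.arccos (Gminus z) := Real.arccos_pos.2 hgm
    rcases mul_eq_zero.1 h1 with h' | h'
    · exact h (Real.sign_eq_zero_iff.1 h')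
    · linarith
  have hA0 : A = 0 := by rw [hzre] at hre0; linarith
  -- bound on |B|
  have hBle : |z.im| ≤ 1 := by
    have h1' : ‖u + Complex.I • v‖ ≤ 2 := by
      calc ‖u + Complex.I • v‖ ≤ ‖u‖ + ‖Complex.I • v‖ := norm_add_le _ _
        _ ≤ 2 := by rw [hu1, hIv1]; norm_num
    have h2' : ‖u - Complex.I • v‖ ≤ 2 := by
      calc ‖u - Complex.I • v‖ ≤ ‖u‖ + ‖Complex.I • v‖ := norm_sub_le _ _
        _ ≤ 2 := by rw [hu1, hIv1]; norm_num
    have hn1 : (0:ℝ) ≤ ‖u + Complex.I • v‖ := norm_nonneg _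
    have hn2 : (0:ℝ) ≤ ‖u - Complex.I • v‖ := norm_nonneg _
    rw [hzim, abs_le]
    constructor <;> rw [hB_def] <;> nlinarith
  -- solve for z.im
  have hGp : Gplus z = 1 + 2 * z.im ^ 2 := Gplus_of_re_zero hre0
  have harsinh : Real.arsinh z.im = -b := by
    rw [hGp, arcosh_one_add_two_sq] at h2
    have : Real.sign z.im * (2 * Real.arsinh |z.im|) = 2 * Real.arsinh z.im := by
      rw [← sign_mul_arsinh_abs z.im]; ring
    rw [this] at h2
    linarith
  have hzim_val : z.im = -Real.sinh b := by
    have := congrArg Real.sinh harsinh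
    rw [Real.sinh_arsinh, Real.sinh_neg] at this
    exact this
  -- first claim
  have harsinh1 : Real.arsinh 1 = Real.log (Real.sqrt 2 + 1) := by
    have h12 : (1:ℝ) + 1 ^ 2 = 2 := by norm_num
    rw [Real.arsinh, h12, add_comm]
  have hbound : |b| ≤ Real.log (Real.sqrt 2 + 1) := by
    rw [abs_le]
    have hle1 : z.im ≤ 1 := by have := abs_le.1 hBle; exact this.2
    have hlem1 : -1 ≤ z.im := by have := abs_le.1 hBle; exact this.1
    constructor
    · have : Real.arsinh z.im ≤ Real.arsinh 1 := Real.arsinh_le_arsinh.2 hle1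
      rw [harsinh, harsinh1] at this
      linarith
    · have : Real.arsinh (-z.im) ≤ Real.arsinh 1 := Real.arsinh_le_arsinh.2 (by linarith)
      rw [Real.arsinh_neg, harsinh, neg_neg, harsinh1] at this
      linarith
  -- second part: cangle (I • x) y
  have hnIx : ‖Complex.I • x‖ = ‖x‖ := by rw [norm_smul, Complex.norm_I, one_mul]
  have hIx : Complex.I • x ≠ 0 := smul_ne_zero Complex.I_ne_zero hx
  have huI : ((‖x‖⁻¹ : ℝ) : ℂ) • (Complex.I • x) = Complex.I • u := by
    rw [hu_def, smul_comm]
  have hIIw : ∀ w : X, Complex.I • (Complex.I • w) = -w := by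
    intro w
    rw [smul_smul, Complex.I_mul_I, neg_one_smul]
  have hnI : ∀ w : X, ‖Complex.I • w‖ = ‖w‖ := by
    intro w
    rw [norm_smul, Complex.norm_I, one_mul]
  have hn1 : ‖Complex.I • u + v‖ = ‖u - Complex.I • v‖ := by
    rw [← hnI (u - Complex.I • v), smul_sub, hIIw, sub_neg_eq_add]
  have hn2 : ‖Complex.I • u - v‖ = ‖u + Complex.I • v‖ := by
    rw [← hnI (u + Complex.I • v), smul_add, hIIw]
    congr 1
    abel
  have hn3 : ‖Complex.I • u + Complex.I • v‖ = ‖u + v‖ := by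
    rw [← smul_add, hnI]
  have hn4 : ‖Complex.I • u - Complex.I • v‖ = ‖u - v‖ := by
    rw [← smul_sub, hnI]
  have hcp2 : cprod (Complex.I • x) y
      = ((‖x‖ * ‖y‖ : ℝ) : ℂ) * (1 / 4 : ℂ) * (((-B : ℝ) : ℂ) + Complex.I * ((A : ℝ) : ℂ)) := by
    rw [cprod, if_neg (by push_neg; exact ⟨hIx, hy⟩), hnIx, huI, ← hv_def, hn1, hn2, hn3, hn4,
      hA_def, hB_def]
    push_cast
    ring
  set t : ℝ := Real.sinh b with ht_def
  have hmB : -B = 4 * t := by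
    have : z.im = B / 4 := hzim
    rw [hzim_val] at this
    rw [ht_def]; linarith
  have hz2 : cprod (Complex.I • x) y / ((‖Complex.I • x‖ * ‖y‖ : ℝ) : ℂ) = ((t : ℝ) : ℂ) := by
    have hcp2' : cprod (Complex.I • x) y = ((‖x‖ * ‖y‖ : ℝ) : ℂ) * ((t : ℝ) : ℂ) := by
      rw [hcp2, hmB, hA0]; push_cast; ring
    rw [hnIx, hcp2', mul_div_cancel_left₀ _ hc]
  have hca2 : cangle (Complex.I • x) y = carccos ((t : ℝ) : ℂ) := by
    rw [cangle, hz2]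
  have ht2 : t ^ 2 ≤ 1 := by
    have : |t| ≤ 1 := by
      rw [ht_def, ← abs_neg, ← hzim_val]
      exact hBle
    nlinarith [abs_nonneg t, sq_abs t]
  have habt : |t| ≤ 1 := (sq_le_one_iff_abs_le_one t).1 ht2
  have hmain : cangle (Complex.I • x) y
      = ((Real.pi / 2 - Real.sign t * Real.arccos (1 - 2 * t ^ 2) / 2 : ℝ) : ℂ) := by
    rw [hca2, carccos_ofReal ht2]
  -- the arcsin identity
  have hkey : Real.sign t * Real.arccos (1 - 2 * t ^ 2) / 2 = Real.arcsin t := by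
    rw [arccos_one_sub_two_sq habt, ← sign_mul_arcsin_abs t]
    ring
  have hsign : Real.sign t = Real.sign b := by rw [ht_def, sign_sinh]
  have hcosh : 3 - 2 * Real.cosh b ^ 2 = 1 - 2 * t ^ 2 := by
    have := Real.cosh_sq b
    rw [ht_def]; linarith
  have hcosh2 : 2 - Real.cosh (2 * b) = 1 - 2 * t ^ 2 := by
    have h1 := Real.cosh_two_mul b
    have h2 := Real.cosh_sq b
    rw [ht_def]; linarith
  refine ⟨hbound, ?_, ?_, ?_, ?_, ?_⟩
  · rw [hmain]; simp
  · rw [hmain, hcosh, ← hsign]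
    exact congrArg _ (by ring)
  · rw [hmain, hcosh2, ← hsign]
    exact congrArg _ (by ring)
  · rw [hmain, hkey]
  · rw [hmain, hkey, Real.arccos_eq_pi_div_two_sub_arcsin]
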